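/- Let G = (V,E) be a finite simple graph and M ⊆ E a matching in G (a set of pairwise non-incident edges) such that for every matching edge e = {u,v} ∈ M, both u and v are adjacent to every other vertex w ∈ V \ {u,v}. Then Q(G−M, x) = Σ_{I ⊆ M} (−x)^{|I|} · Q(G†I, x), where G−M is the graph obtained from G by deleting all edges of M, and G†I denotes the graph obtained from G by deleting, for every edge of I, both of its endpoints (together with all incident edges). -/

import Mathlib

open Finset

variable {V : Type*} [Fintype V] [DecidableEq V]

/-- `P` is a set partition of the vertex set `V`, given as a finset of (nonempty,
pairwise disjoint, covering) blocks. -/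
def IsPartition (P : Finset (Finset V)) : Prop :=
  ∅ ∉ P ∧ ∀ v : V, ∃! B : Finset V, B ∈ P ∧ v ∈ B

/-- `P` is a connected set partition of `G`: every block induces a connected subgraph. -/
def IsConnPartition (G : SimpleGraph V) (P : Finset (Finset V)) : Prop :=
  IsPartition P ∧ ∀ B ∈ P, (G.induce (B : Set V)).Connected

open scoped Classical in
/-- The finset of all connected set partitions (`Π_c(G)`). -/
noncomputable def connParts (G : SimpleGraph V) : Finset (Finset (Finset V)) :=
  Finset.univ.filter (IsConnPartition G)

open scoped Classical in
/-- The partition polynomial `Q(G,x) = Σ_{π ∈ Π_c(G)} x^{|π|}`, evaluated at `x : ℤ`. -/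
noncomputable def Q (G : SimpleGraph V) (x : ℤ) : ℤ :=
  ∑ P ∈ connParts G, x ^ P.card

/-!
Deleting the edges of `M` affects the connectivity of a block only when the block is an edge
`{u, v}` of `M`: such a block falls apart in `G - M`, while any other connected block of `G`
stays connected, because an edge of `M` inside it can be bypassed through a third vertex of the
block, which is adjacent to both ends and joined to them by edges outside the matching. Hence
`Π_c(G - M)` consists of the connected partitions of `G` having no edge of `M` as a block, and
inclusion–exclusion over the set `I ⊆ M` of edges that are blocks gives the alternating sum.
Removing the `|I|` blocks of `I` is a bijection from the connected partitions of `G` containing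
them onto the connected partitions of `G†I`.
-/

open SimpleGraph

/- The decidability of both filters is taken as an argument, so that the lemma also rewrites
filters whose instances were synthesized differently (e.g. by `Fintype.decidableForallFintype`). -/
theorem Finset.sum_filter_forall_not_eq_sum_powerset {ι β R : Type*} [DecidableEq ι]
    [CommRing R] (s : Finset β) (M : Finset ι) (p : ι → β → Prop)
    [DecidablePred fun b => ∀ i ∈ M, ¬p i b]
    [∀ t : Finset ι, DecidablePred fun b => ∀ i ∈ t, p i b] (f : β → R) :
    ∑ b ∈ s with ∀ i ∈ M, ¬p i b, f b =
      ∑ t ∈ M.powerset, (-1) ^ t.card * ∑ b ∈ s with ∀ i ∈ t, p i b, f b := by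
  classical
  simp_rw [Finset.mul_sum, Finset.sum_filter]
  rw [Finset.sum_comm]
  refine Finset.sum_congr rfl fun b _ => ?_
  have hpowerset :
      (M.filter (p · b)).powerset = M.powerset.filter (fun t => ∀ i ∈ t, p i b) := by
    ext t
    simp only [Finset.mem_powerset, Finset.mem_filter, Finset.subset_iff]
    exact ⟨fun h => ⟨fun i hi => (h hi).1, fun i hi => (h hi).2⟩,
      fun h i hi => ⟨h.1 hi, h.2 i hi⟩⟩
  have halternating : ∑ t ∈ M.powerset with ∀ i ∈ t, p i b, (-1 : R) ^ t.card =
      if ∀ i ∈ M, ¬p i b then 1 else 0 := by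
    have h := congrArg (Int.cast : ℤ → R)
      (Finset.sum_powerset_neg_one_pow_card (x := M.filter (p · b)))
    push_cast at h
    simpa only [hpowerset, Finset.filter_eq_empty_iff] using h
  rw [← Finset.sum_filter, ← Finset.sum_mul, halternating]
  split_ifs <;> simp

section Partition

variable {α : Type*}

/-- Blocks are finsets of the ambient type, so that partitions of an induced subgraph `G[S]` can be
compared with partitions of `G`. -/
def IsPartitionOn (S : Set α) (P : Finset (Finset α)) : Prop :=
  ∅ ∉ P ∧ (P : Set (Finset α)).PairwiseDisjoint id ∧ ∀ v, v ∈ S ↔ ∃ B ∈ P, v ∈ B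

lemma isPartition_iff_isPartitionOn_univ {P : Finset (Finset α)} :
    IsPartition P ↔ IsPartitionOn Set.univ P := by
  refine and_congr_right fun _ => ⟨fun h => ⟨?_, fun v => ?_⟩, fun ⟨hdisj, hcov⟩ v => ?_⟩
  · intro B hB C hC hBC
    refine Finset.disjoint_left.mpr fun v hvB hvC => hBC ?_
    exact (h v).unique ⟨hB, hvB⟩ ⟨hC, hvC⟩
  · simpa using (h v).exists
  · obtain ⟨B, hB, hvB⟩ := (hcov v).mp trivial
    refine ⟨B, ⟨hB, hvB⟩, fun C ⟨hC, hvC⟩ => ?_⟩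
    by_contra hCB
    exact Finset.disjoint_left.mp (hdisj hC hB hCB) hvC hvB

lemma isPartitionOn_map_iff {β : Type*} (f : α ↪ β) {S : Set α} {P : Finset (Finset α)} :
    IsPartitionOn (f '' S) (P.map (Finset.mapEmbedding f).toEmbedding) ↔ IsPartitionOn S P := by
  unfold IsPartitionOn
  refine and_congr (by simp) (and_congr ?_ ?_)
  · rw [Finset.coe_map]
    refine (Set.InjOn.pairwiseDisjoint_image (RelEmbedding.injective _).injOn).trans ?_
    exact forall₂_congr fun B _ => forall₂_congr fun C _ => by simp [Function.onFun]
  · constructor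
    · intro h a
      simpa using h (f a)
    · intro h b
      constructor
      · rintro ⟨a, ha, rfl⟩
        obtain ⟨B, hB, haB⟩ := (h a).mp ha
        exact ⟨B.map f, Finset.mem_map_of_mem _ hB, Finset.mem_map_of_mem f haB⟩
      · rintro ⟨_, hBmap, hb⟩
        obtain ⟨B, hB, rfl⟩ := Finset.mem_map.mp hBmap
        obtain ⟨a, ha, rfl⟩ := Finset.mem_map.mp hb
        exact ⟨a, (h a).mpr ⟨B, hB, ha⟩, rfl⟩

variable [DecidableEq α]

lemma IsPartitionOn.sdiff {P F : Finset (Finset α)} (hP : IsPartitionOn Set.univ P)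
    (hFP : F ⊆ P) : IsPartitionOn {v | ∀ B ∈ F, v ∉ B} (P \ F) := by
  obtain ⟨hne, hdisj, hcov⟩ := hP
  refine ⟨fun h => hne (Finset.sdiff_subset h), hdisj.subset (by simp),
    fun v => ⟨fun hv => ?_, ?_⟩⟩
  · obtain ⟨B, hB, hvB⟩ := (hcov v).mp trivial
    exact ⟨B, Finset.mem_sdiff.mpr ⟨hB, fun hBF => hv B hBF hvB⟩, hvB⟩
  · rintro ⟨B, hB, hvB⟩ C hCF hvC
    rw [Finset.mem_sdiff] at hB
    have hBC : B ≠ C := fun h => hB.2 (h ▸ hCF)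
    exact Finset.disjoint_left.mp (hdisj hB.1 (hFP hCF) hBC) hvB hvC

lemma IsPartitionOn.union {P F : Finset (Finset α)}
    (hP : IsPartitionOn {v | ∀ B ∈ F, v ∉ B} P) (hFne : ∅ ∉ F)
    (hFdisj : (F : Set (Finset α)).PairwiseDisjoint id) :
    IsPartitionOn Set.univ (P ∪ F) ∧ Disjoint P F := by
  obtain ⟨hne, hdisj, hcov⟩ := hP
  have houtside : ∀ B ∈ P, ∀ C ∈ F, Disjoint B C := fun B hB C hC =>
    Finset.disjoint_left.mpr fun v hvB => ((hcov v).mpr ⟨B, hB, hvB⟩) C hC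
  refine ⟨⟨?_, ?_, fun v => ?_⟩, ?_⟩
  · simp only [Finset.mem_union, not_or]
    exact ⟨hne, hFne⟩
  · rw [Finset.coe_union]
    exact hdisj.union hFdisj fun B hB C hC _ => houtside B hB C hC
  · by_cases hv : ∀ B ∈ F, v ∉ B
    · obtain ⟨B, hB, hvB⟩ := (hcov v).mp hv
      simpa using ⟨B, Or.inl hB, hvB⟩
    · push Not at hv
      obtain ⟨C, hC, hvC⟩ := hv
      simpa using ⟨C, Or.inr hC, hvC⟩
  · refine Finset.disjoint_left.mpr fun B hB hBF => hne ?_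
    have hBempty : B = ∅ := by simpa using houtside B hB B hBF
    exact hBempty ▸ hB

end Partition

namespace SimpleGraph

variable {W : Type*}

lemma connected_induce_induce_iff (H : SimpleGraph W) {S : Set W} {B : Set S} :
    ((H.induce S).induce B).Connected ↔ (H.induce (Subtype.val '' B)).Connected :=
  Iso.connected_iff ⟨Equiv.Set.image _ _ Subtype.val_injective, Iff.rfl⟩

lemma Connected.of_adj_reachable {H K : SimpleGraph W} (hH : H.Connected)
    (h : ∀ a b, H.Adj a b → K.Reachable a b) : K.Connected := by
  have hlift : Relation.ReflTransGen H.Adj ≤ Relation.ReflTransGen K.Adj :=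
    Relation.reflTransGen_closed fun a b hab => (reachable_iff_reflTransGen a b).mp (h a b hab)
  refine (connected_iff K).mpr ⟨fun a b => ?_, hH.nonempty⟩
  rw [reachable_iff_reflTransGen]
  exact hlift a b ((reachable_iff_reflTransGen a b).mp (hH a b))

end SimpleGraph

section ConnPartition

variable {α : Type*}

def IsConnPartitionOn (G : SimpleGraph α) (S : Set α) (P : Finset (Finset α)) : Prop :=
  IsPartitionOn S P ∧ ∀ B ∈ P, (G.induce (B : Set α)).Connected

lemma isConnPartition_iff_isConnPartitionOn_univ {G : SimpleGraph α} {P : Finset (Finset α)} :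
    IsConnPartition G P ↔ IsConnPartitionOn G Set.univ P :=
  and_congr_left' isPartition_iff_isPartitionOn_univ

def coeBlocks (S : Set α) : Finset S ↪ Finset α :=
  (Finset.mapEmbedding (Function.Embedding.subtype _)).toEmbedding

lemma isConnPartition_induce_iff (G : SimpleGraph α) (S : Set α) (P : Finset (Finset S)) :
    IsConnPartition (G.induce S) P ↔
      IsConnPartitionOn G S (P.map (coeBlocks S)) := by
  rw [isConnPartition_iff_isConnPartitionOn_univ, IsConnPartitionOn, IsConnPartitionOn, coeBlocks,
    ← isPartitionOn_map_iff (Function.Embedding.subtype _), Set.image_univ,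
    Function.Embedding.coe_subtype, Subtype.range_coe_subtype, Finset.forall_mem_map]
  refine and_congr_right' (forall₂_congr fun B _ => ?_)
  rw [connected_induce_induce_iff, RelEmbedding.coe_toEmbedding, Finset.mapEmbedding_apply,
    Finset.coe_map, Function.Embedding.coe_subtype]

lemma exists_map_coeBlocks_eq {S : Set α} {P : Finset (Finset α)} (hP : ∀ B ∈ P, ↑B ⊆ S) :
    ∃ P' : Finset (Finset S), P'.map (coeBlocks S) = P := by
  classical
  have hblock : ↑P ⊆ Finset.map (Function.Embedding.subtype (· ∈ S)) '' Set.univ := by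
    intro B hB
    exact ⟨B.subtype (· ∈ S), trivial, Finset.subtype_map_of_mem fun v hv => hP B hB hv⟩
  obtain ⟨P', -, hP'⟩ := Finset.subset_set_image_iff.mp hblock
  exact ⟨P', by rw [Finset.map_eq_image]; exact hP'⟩

lemma mem_connParts [Fintype α] {G : SimpleGraph α} {P : Finset (Finset α)} :
    P ∈ connParts G ↔ IsConnPartition G P := by
  simp [connParts]

open scoped Classical in
lemma Q_induce_eq_sum [Fintype α] (G : SimpleGraph α) (S : Set α) [Fintype S] (x : ℤ) :
    Q (G.induce S) x = ∑ P ∈ Finset.univ.filter (IsConnPartitionOn G S), x ^ P.card := by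
  set ψ := (Finset.mapEmbedding (coeBlocks S)).toEmbedding
  have himage : (connParts (G.induce S)).map ψ = Finset.univ.filter (IsConnPartitionOn G S) := by
    ext P
    simp only [connParts, Finset.mem_map, Finset.mem_filter, Finset.mem_univ, true_and]
    constructor
    · rintro ⟨P', hP', rfl⟩
      exact (isConnPartition_induce_iff G S P').mp hP'
    · intro hP
      obtain ⟨P', rfl⟩ := exists_map_coeBlocks_eq fun B hB v hv => (hP.1.2.2 v).mpr ⟨B, hB, hv⟩
      exact ⟨P', (isConnPartition_induce_iff G S P').mpr hP, rfl⟩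
  rw [Q, ← himage, Finset.sum_map]
  simp [ψ]

open scoped Classical in
lemma sum_connParts_superset [Fintype α] [DecidableEq α] (G : SimpleGraph α)
    {F : Finset (Finset α)} (hFne : ∅ ∉ F) (hFdisj : (F : Set (Finset α)).PairwiseDisjoint id)
    (hFconn : ∀ B ∈ F, (G.induce (B : Set α)).Connected) (x : ℤ) :
    ∑ P ∈ connParts G with F ⊆ P, x ^ P.card =
      x ^ F.card * ∑ P ∈ Finset.univ.filter (IsConnPartitionOn G {v | ∀ B ∈ F, v ∉ B}),
        x ^ P.card := by
  rw [connParts, Finset.filter_filter, Finset.mul_sum]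
  refine Finset.sum_nbij' (· \ F) (· ∪ F) ?_ ?_ ?_ ?_ ?_ <;> intro P hP <;>
    simp only [Finset.mem_filter_univ] at hP ⊢
  · obtain ⟨⟨hpart, hconn⟩, hFP⟩ := hP
    exact ⟨(isPartition_iff_isPartitionOn_univ.mp hpart).sdiff hFP,
      fun B hB => hconn B (Finset.mem_sdiff.mp hB).1⟩
  · obtain ⟨hpart, hconn⟩ := hP
    refine ⟨⟨isPartition_iff_isPartitionOn_univ.mpr (hpart.union hFne hFdisj).1, fun B hB => ?_⟩,
      Finset.subset_union_right⟩
    rcases Finset.mem_union.mp hB with hBP | hBF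
    exacts [hconn B hBP, hFconn B hBF]
  · exact Finset.sdiff_union_of_subset hP.2
  · exact Finset.union_sdiff_cancel_right (hP.1.union hFne hFdisj).2
  · rw [← pow_add, add_comm, Finset.card_sdiff_add_card_eq_card hP.2]

end ConnPartition

section Matching

variable {α : Type*} [DecidableEq α]

lemma Sym2.toFinset_injective : Function.Injective (Sym2.toFinset : Sym2 α → Finset α) :=
  fun e f h => Sym2.ext fun v => by rw [← Sym2.mem_toFinset, h, Sym2.mem_toFinset]

lemma Sym2.mk_notMem_of_pairwiseDisjoint {M : Set (Sym2 α)} (hM : M.PairwiseDisjoint Sym2.toFinset)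
    {e : Sym2 α} (he : e ∈ M) {u w : α} (hu : u ∈ e) (hw : w ∉ e) : s(u, w) ∉ M := by
  intro huw
  have hne : s(u, w) ≠ e := fun heq => hw (heq ▸ Sym2.mem_mk_right u w)
  exact Finset.disjoint_left.mp (hM huw he hne) (Sym2.mem_toFinset.mpr (Sym2.mem_mk_left u w))
    (Sym2.mem_toFinset.mpr hu)

variable {G : SimpleGraph α}

lemma not_connected_induce_deleteEdges_toFinset {M : Set (Sym2 α)} {e : Sym2 α} (he : e ∈ M)
    (hdiag : ¬e.IsDiag) : ¬((G.deleteEdges M).induce (e.toFinset : Set α)).Connected := by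
  induction e using Sym2.ind with
  | _ u v =>
  rw [Sym2.mk_isDiag_iff] at hdiag
  rw [Sym2.toFinset_mk_eq, Finset.coe_pair]
  have hbot : (G.deleteEdges M).induce {u, v} = ⊥ := by
    ext ⟨a, ha⟩ ⟨b, hb⟩
    simp only [comap_adj, Function.Embedding.subtype_apply, deleteEdges_adj, bot_adj,
      iff_false, not_and, not_not]
    intro hab
    rcases ha with rfl | rfl <;> rcases hb with rfl | rfl
    exacts [absurd rfl hab.ne, he, Sym2.eq_swap ▸ he, absurd rfl hab.ne]
  rw [hbot, connected_bot_iff]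
  rintro ⟨hsub, -⟩
  exact hdiag (congrArg Subtype.val (hsub.elim ⟨u, by simp⟩ ⟨v, by simp⟩))

lemma connected_induce_deleteEdges {M : Set (Sym2 α)} (hM : M.PairwiseDisjoint Sym2.toFinset)
    (hdom : ∀ e ∈ M, ∀ u : α, u ∈ e → ∀ w : α, w ∉ e → G.Adj u w) {B : Finset α}
    (hB : (G.induce (B : Set α)).Connected) (hBM : ∀ e ∈ M, e.toFinset ≠ B) :
    ((G.deleteEdges M).induce (B : Set α)).Connected := by
  refine hB.of_adj_reachable fun a b hab => ?_
  -- an edge `ab` of `M` is replaced by the detour `a - w - b` through a third vertex `w ∈ B`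
  by_cases habM : s(a.1, b.1) ∈ M
  · obtain ⟨w, hwB, hw⟩ : ∃ w ∈ B, w ∉ s(a.1, b.1).toFinset := by
      refine Finset.exists_of_ssubset (Finset.ssubset_iff_subset_ne.mpr ⟨?_, hBM _ habM⟩)
      simp [Sym2.toFinset_mk_eq, Finset.insert_subset_iff]
    rw [Sym2.mem_toFinset] at hw
    have haw : ((G.deleteEdges M).induce (B : Set α)).Adj a ⟨w, hwB⟩ :=
      deleteEdges_adj.mpr ⟨hdom _ habM a (Sym2.mem_mk_left _ _) w hw,
        Sym2.mk_notMem_of_pairwiseDisjoint hM habM (Sym2.mem_mk_left _ _) hw⟩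
    have hbw : ((G.deleteEdges M).induce (B : Set α)).Adj b ⟨w, hwB⟩ :=
      deleteEdges_adj.mpr ⟨hdom _ habM b (Sym2.mem_mk_right _ _) w hw,
        Sym2.mk_notMem_of_pairwiseDisjoint hM habM (Sym2.mem_mk_right _ _) hw⟩
    exact haw.reachable.trans hbw.reachable.symm
  · exact Adj.reachable (deleteEdges_adj.mpr ⟨hab, habM⟩ : (G.deleteEdges M).Adj a b)

lemma connParts_deleteEdges [Fintype α] {M : Finset (Sym2 α)}
    (hME : (M : Set (Sym2 α)) ⊆ G.edgeSet) (hM : (M : Set (Sym2 α)).PairwiseDisjoint Sym2.toFinset)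
    (hdom : ∀ e ∈ M, ∀ u : α, u ∈ e → ∀ w : α, w ∉ e → G.Adj u w) :
    connParts (G.deleteEdges (M : Set (Sym2 α))) = {P ∈ connParts G | ∀ e ∈ M, e.toFinset ∉ P} := by
  ext P
  simp only [Finset.mem_filter, mem_connParts, IsConnPartition]
  constructor
  · rintro ⟨hpart, hconn⟩
    refine ⟨⟨hpart, fun B hB => (hconn B hB).mono (comap_monotone _ (deleteEdges_le M))⟩,
      fun e he heP => ?_⟩
    exact not_connected_induce_deleteEdges_toFinset he (G.not_isDiag_of_mem_edgeSet (hME he))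
      (hconn _ heP)
  · rintro ⟨⟨hpart, hconn⟩, hMP⟩
    exact ⟨hpart, fun B hB => connected_induce_deleteEdges hM hdom (hconn B hB)
      fun e he heB => hMP e he (heB ▸ hB)⟩

lemma sum_connParts_forall_toFinset_mem [Fintype α] {I : Finset (Sym2 α)}
    (hIE : (I : Set (Sym2 α)) ⊆ G.edgeSet) (hI : (I : Set (Sym2 α)).PairwiseDisjoint Sym2.toFinset)
    (x : ℤ) :
    ∑ P ∈ connParts G with ∀ e ∈ I, e.toFinset ∈ P, x ^ P.card =
      x ^ I.card * Q (G.induce {v : α | ∀ e ∈ I, v ∉ e}) x := by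
  have hblocks : ∀ B ∈ I.image Sym2.toFinset, (G.induce (B : Set α)).Connected := by
    simp only [Finset.mem_image, forall_exists_index, and_imp, forall_apply_eq_imp_iff₂]
    intro e he
    induction e using Sym2.ind with
    | _ u v =>
    rw [Sym2.toFinset_mk_eq, Finset.coe_pair]
    exact induce_pair_connected_of_adj (hIE he)
  have hdisj : (↑(I.image Sym2.toFinset) : Set (Finset α)).PairwiseDisjoint id := by
    rw [Finset.coe_image, Set.InjOn.pairwiseDisjoint_image Sym2.toFinset_injective.injOn]
    exact hI
  have hcomplement : {v : α | ∀ B ∈ I.image Sym2.toFinset, v ∉ B} = {v | ∀ e ∈ I, v ∉ e} := by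
    ext v
    simp
  have hsuperset := sum_connParts_superset G (by simp) hdisj hblocks x
  rw [Finset.card_image_of_injective _ Sym2.toFinset_injective, hcomplement,
    ← Q_induce_eq_sum] at hsuperset
  simpa only [Finset.image_subset_iff] using hsuperset

end Matching

/-- Matching extraction: if `M` is a matching of `G` whose edges have both endpoints
adjacent to every other vertex, then `Q(G-M,x) = Σ_{I⊆M} (-x)^{|I|} Q(G†I,x)`,
where `G†I` deletes both endpoints of every edge of `I`. -/
theorem matching_extraction (G : SimpleGraph V) (M : Finset (Sym2 V))
    (hME : (M : Set (Sym2 V)) ⊆ G.edgeSet)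
    (hmatch : ∀ e ∈ M, ∀ f ∈ M, e ≠ f → ∀ v : V, v ∈ e → v ∉ f)
    (hdom : ∀ e ∈ M, ∀ u : V, u ∈ e → ∀ w : V, w ∉ e → G.Adj u w) (x : ℤ) :
    Q (G.deleteEdges (M : Set (Sym2 V))) x
      = ∑ I ∈ M.powerset,
          (-x) ^ I.card * Q (G.induce {v : V | ∀ e ∈ I, v ∉ e}) x := by
  have hM : (M : Set (Sym2 V)).PairwiseDisjoint Sym2.toFinset := fun e he f hf hef =>
    Finset.disjoint_left.mpr fun v hve hvf =>
      hmatch e he f hf hef v (Sym2.mem_toFinset.mp hve) (Sym2.mem_toFinset.mp hvf)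
  rw [Q, connParts_deleteEdges hME hM hdom,
    Finset.sum_filter_forall_not_eq_sum_powerset (R := ℤ) _ _ fun (e : Sym2 V) P => e.toFinset ∈ P]
  refine Finset.sum_congr rfl fun I hI => ?_
  have hIM : (I : Set (Sym2 V)) ⊆ M := Finset.coe_subset.mpr (Finset.mem_powerset.mp hI)
  rw [sum_connParts_forall_toFinset_mem (hIM.trans hME) (hM.subset hIM), neg_pow x, mul_assoc]
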